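/- arXiv:2010.04213 — 2 statements merged into one kernel-verified Lean document; each statement's English description precedes it below -/
import Mathlib

section
/- Assume Σ is reachable from x* and controllable to x*, and that Σ is cyclo-dissipative with respect to x*. Then for every state x the set {−supply : trajectories from x to x*} is nonempty and bounded above and the set {supply : trajectories from x* to x} is nonempty and bounded below; the functions F_ac(x) := sup{−supply : trajectories from x to x*} and F_rc(x) := inf{supply : trajectories from x* to x} are real-valued storage functions with F_ac(x*) = F_rc(x*) = 0, and every storage function F satisfies F_ac(x) ≤ F(x) − F(x*) ≤ F_rc(x) for all x. -/
/-!
Trajectories can be concatenated (after a time shift), and supplies add up. Following a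
trajectory from `x*` to `x` by one from `x` back to `x*` gives a cycle at `x*`, whose supply is
nonnegative; so every element of `{−supply : x → x*}` lies below every element of
`{supply : x* → x}`, and reachability/controllability make both sets nonempty and hence bounded.
Prepending (resp. appending) a trajectory `x₁ → x₂` to the trajectories defining `F_ac x₂`
(resp. `F_rc x₁`) gives the dissipation inequality for `F_ac` (resp. `F_rc`); the constant
trajectory at `x*` shows both vanish there, and the dissipation inequality for `F` along the
defining trajectories yields `F_ac x ≤ F x − F x* ≤ F_rc x`.
-/

open MeasureTheory

/-- A trajectory of the control system `ẋ = f(x,u)` with supply rate `s`,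
on an interval `[t₁, t₂]`. -/
structure Traj {n m : ℕ} (f : (Fin n → ℝ) → (Fin m → ℝ) → (Fin n → ℝ))
    (s : (Fin n → ℝ) → (Fin m → ℝ) → ℝ) where
  t₁ : ℝ
  t₂ : ℝ
  hle : t₁ ≤ t₂
  x : ℝ → Fin n → ℝ
  u : ℝ → Fin m → ℝ
  hu : Measurable u
  hx : Continuous x
  hf : IntervalIntegrable (fun t => f (x t) (u t)) volume t₁ t₂
  hs : IntervalIntegrable (fun t => s (x t) (u t)) volume t₁ t₂
  hdyn : ∀ t ∈ Set.Icc t₁ t₂, x t = x t₁ + ∫ τ in t₁..t, f (x τ) (u τ)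

/-- The supply of a trajectory. -/
noncomputable def Traj.supply {n m : ℕ} {f : (Fin n → ℝ) → (Fin m → ℝ) → (Fin n → ℝ)}
    {s : (Fin n → ℝ) → (Fin m → ℝ) → ℝ} (T : Traj f s) : ℝ :=
  ∫ t in T.t₁..T.t₂, s (T.x t) (T.u t)

/-- `F` is a storage function: the dissipation inequality holds along all trajectories. -/
def IsStorage {n m : ℕ} (f : (Fin n → ℝ) → (Fin m → ℝ) → (Fin n → ℝ))
    (s : (Fin n → ℝ) → (Fin m → ℝ) → ℝ) (F : (Fin n → ℝ) → ℝ) : Prop :=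
  ∀ T : Traj f s, F (T.x T.t₂) - F (T.x T.t₁) ≤ T.supply

/-- Cyclo-dissipativity with respect to the ground state `xs`: nonnegative supply along
every trajectory beginning and ending at `xs`. -/
def CycloDissipativeWrt {n m : ℕ} (f : (Fin n → ℝ) → (Fin m → ℝ) → (Fin n → ℝ))
    (s : (Fin n → ℝ) → (Fin m → ℝ) → ℝ) (xs : Fin n → ℝ) : Prop :=
  ∀ T : Traj f s, T.x T.t₁ = xs → T.x T.t₂ = xs → 0 ≤ T.supply

/-- The set of values `-supply` over trajectories from `x` to `xs`. -/
def Sac {n m : ℕ} (f : (Fin n → ℝ) → (Fin m → ℝ) → (Fin n → ℝ))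
    (s : (Fin n → ℝ) → (Fin m → ℝ) → ℝ) (xs x : Fin n → ℝ) : Set ℝ :=
  {r : ℝ | ∃ T : Traj f s, T.x T.t₁ = x ∧ T.x T.t₂ = xs ∧ r = -T.supply}

/-- The set of values `supply` over trajectories from `xs` to `x`. -/
def Src {n m : ℕ} (f : (Fin n → ℝ) → (Fin m → ℝ) → (Fin n → ℝ))
    (s : (Fin n → ℝ) → (Fin m → ℝ) → ℝ) (xs x : Fin n → ℝ) : Set ℝ :=
  {r : ℝ | ∃ T : Traj f s, T.x T.t₁ = xs ∧ T.x T.t₂ = x ∧ r = T.supply}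

open Set
open scoped Interval

section Gluing

variable {E : Type*} [NormedAddCommGroup E] {G g₁ g₂ : ℝ → E} {a b c : ℝ}

theorem eqOn_Iic_comp_ite_le {α β γ : Type*} (g : α → β → γ) (x₁ x₂ : ℝ → α) (u₁ u₂ : ℝ → β)
    (b : ℝ) :
    EqOn (fun t => g (if t ≤ b then x₁ t else x₂ t) (if t ≤ b then u₁ t else u₂ t))
      (fun t => g (x₁ t) (u₁ t)) (Iic b) := fun t h => by
  simp only [if_pos (mem_Iic.mp h)]

theorem eqOn_Ioi_comp_ite_le {α β γ : Type*} (g : α → β → γ) (x₁ x₂ : ℝ → α) (u₁ u₂ : ℝ → β)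
    (b : ℝ) :
    EqOn (fun t => g (if t ≤ b then x₁ t else x₂ t) (if t ≤ b then u₁ t else u₂ t))
      (fun t => g (x₂ t) (u₂ t)) (Ioi b) := fun t h => by
  simp only [if_neg (not_le.mpr (mem_Ioi.mp h))]

theorem IntervalIntegrable.of_eqOn_Iic_of_eqOn_Ioi (hab : a ≤ b) (hbc : b ≤ c)
    (h₁ : EqOn G g₁ (Iic b)) (h₂ : EqOn G g₂ (Ioi b))
    (hg₁ : IntervalIntegrable g₁ volume a b) (hg₂ : IntervalIntegrable g₂ volume b c) :
    IntervalIntegrable G volume a c := by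
  refine (hg₁.congr (h₁.symm.mono ?_)).trans (hg₂.congr (h₂.symm.mono ?_))
  · rw [uIoc_of_le hab]; exact Ioc_subset_Iic_self
  · rw [uIoc_of_le hbc]; exact Ioc_subset_Ioi_self

theorem intervalIntegral_eq_add_of_eqOn_Iic_of_eqOn_Ioi [NormedSpace ℝ E] (hab : a ≤ b)
    (hbc : b ≤ c) (h₁ : EqOn G g₁ (Iic b)) (h₂ : EqOn G g₂ (Ioi b))
    (hg₁ : IntervalIntegrable g₁ volume a b) (hg₂ : IntervalIntegrable g₂ volume b c) :
    ∫ t in a..c, G t = (∫ t in a..b, g₁ t) + ∫ t in b..c, g₂ t := by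
  have hG₁ : EqOn G g₁ (uIcc a b) := h₁.mono (by rw [uIcc_of_le hab]; exact Icc_subset_Iic_self)
  have hG₂ : EqOn G g₂ (Ι b c) := h₂.mono (by rw [uIoc_of_le hbc]; exact Ioc_subset_Ioi_self)
  rw [← intervalIntegral.integral_add_adjacent_intervals
      (hg₁.congr (hG₁.symm.mono uIoc_subset_uIcc)) (hg₂.congr hG₂.symm),
    intervalIntegral.integral_congr hG₁,
    intervalIntegral.integral_congr_ae (Filter.Eventually.of_forall fun t ht => hG₂ ht)]

end Gluing

namespace Traj

variable {n m : ℕ} {f : (Fin n → ℝ) → (Fin m → ℝ) → (Fin n → ℝ)}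
  {s : (Fin n → ℝ) → (Fin m → ℝ) → ℝ}

def const (x₀ : Fin n → ℝ) : Traj f s where
  t₁ := 0
  t₂ := 0
  hle := le_rfl
  x _ := x₀
  u _ := 0
  hu := measurable_const
  hx := continuous_const
  hf := IntervalIntegrable.refl
  hs := IntervalIntegrable.refl
  hdyn t ht := by
    obtain rfl : t = 0 := le_antisymm ht.2 ht.1
    simp

@[simp]
theorem supply_const (x₀ : Fin n → ℝ) : (const x₀ : Traj f s).supply = 0 :=
  intervalIntegral.integral_same

def shift (T : Traj f s) (c : ℝ) : Traj f s where
  t₁ := T.t₁ + c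
  t₂ := T.t₂ + c
  hle := add_le_add_left T.hle c
  x t := T.x (t - c)
  u t := T.u (t - c)
  hu := T.hu.comp (measurable_sub_const c)
  hx := T.hx.comp (continuous_sub_right c)
  hf := T.hf.comp_sub_right c
  hs := T.hs.comp_sub_right c
  hdyn t ht := by
    rw [intervalIntegral.integral_comp_sub_right (fun τ => f (T.x τ) (T.u τ)),
      add_sub_cancel_right]
    exact T.hdyn (t - c) ⟨le_sub_iff_add_le.mpr ht.1, sub_le_iff_le_add.mpr ht.2⟩

@[simp]
theorem x_shift_t₁ (T : Traj f s) (c : ℝ) : (T.shift c).x (T.shift c).t₁ = T.x T.t₁ :=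
  congrArg T.x (add_sub_cancel_right _ _)

@[simp]
theorem x_shift_t₂ (T : Traj f s) (c : ℝ) : (T.shift c).x (T.shift c).t₂ = T.x T.t₂ :=
  congrArg T.x (add_sub_cancel_right _ _)

@[simp]
theorem supply_shift (T : Traj f s) (c : ℝ) : (T.shift c).supply = T.supply := by
  simp only [supply, shift]
  rw [intervalIntegral.integral_comp_sub_right (fun τ => s (T.x τ) (T.u τ)),
    add_sub_cancel_right, add_sub_cancel_right]

noncomputable def glue (T₁ T₂ : Traj f s) (ht : T₁.t₂ = T₂.t₁) (hx : T₁.x T₁.t₂ = T₂.x T₂.t₁) :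
    Traj f s where
  t₁ := T₁.t₁
  t₂ := T₂.t₂
  hle := T₁.hle.trans (ht ▸ T₂.hle)
  x t := if t ≤ T₁.t₂ then T₁.x t else T₂.x t
  u t := if t ≤ T₁.t₂ then T₁.u t else T₂.u t
  hu := Measurable.ite measurableSet_Iic T₁.hu T₂.hu
  hx := Continuous.if_le T₁.hx T₂.hx continuous_id continuous_const fun t h => by
    rw [h, hx, ht]
  hf := .of_eqOn_Iic_of_eqOn_Ioi T₁.hle (ht ▸ T₂.hle) (eqOn_Iic_comp_ite_le ..)
    (eqOn_Ioi_comp_ite_le ..) T₁.hf (ht ▸ T₂.hf)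
  hs := .of_eqOn_Iic_of_eqOn_Ioi T₁.hle (ht ▸ T₂.hle) (eqOn_Iic_comp_ite_le ..)
    (eqOn_Ioi_comp_ite_le ..) T₁.hs (ht ▸ T₂.hs)
  hdyn t h := by
    simp only [if_pos T₁.hle]
    by_cases htb : t ≤ T₁.t₂
    · have hsub : uIcc T₁.t₁ t ⊆ Iic T₁.t₂ := by
        rw [uIcc_of_le h.1]; exact Icc_subset_Iic_self.trans (Iic_subset_Iic.mpr htb)
      rw [if_pos htb, intervalIntegral.integral_congr ((eqOn_Iic_comp_ite_le ..).mono hsub)]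
      exact T₁.hdyn t ⟨h.1, htb⟩
    · have hbt : T₂.t₁ ≤ t := ht ▸ (not_le.mp htb).le
      rw [if_neg htb, intervalIntegral_eq_add_of_eqOn_Iic_of_eqOn_Ioi T₁.hle (ht ▸ hbt)
        (eqOn_Iic_comp_ite_le ..) (eqOn_Ioi_comp_ite_le ..) T₁.hf
        (ht ▸ T₂.hf.mono_set (uIcc_subset_uIcc_left (mem_uIcc_of_le hbt h.2))),
        T₂.hdyn t ⟨hbt, h.2⟩, ← hx, T₁.hdyn T₁.t₂ ⟨T₁.hle, le_rfl⟩, ht, add_assoc]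

section glue

variable (T₁ T₂ : Traj f s) (ht : T₁.t₂ = T₂.t₁) (hx : T₁.x T₁.t₂ = T₂.x T₂.t₁)

theorem x_glue_t₁ : (T₁.glue T₂ ht hx).x (T₁.glue T₂ ht hx).t₁ = T₁.x T₁.t₁ :=
  if_pos T₁.hle

theorem x_glue_t₂ : (T₁.glue T₂ ht hx).x (T₁.glue T₂ ht hx).t₂ = T₂.x T₂.t₂ := by
  change (if T₂.t₂ ≤ T₁.t₂ then T₁.x T₂.t₂ else T₂.x T₂.t₂) = _
  split_ifs with h
  · rw [le_antisymm h (ht ▸ T₂.hle), hx, ht]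
  · rfl

theorem supply_glue : (T₁.glue T₂ ht hx).supply = T₁.supply + T₂.supply := by
  rw [supply, supply, supply, ← ht]
  exact intervalIntegral_eq_add_of_eqOn_Iic_of_eqOn_Ioi T₁.hle (ht ▸ T₂.hle)
    (eqOn_Iic_comp_ite_le ..) (eqOn_Ioi_comp_ite_le ..) T₁.hs (ht ▸ T₂.hs)

end glue

noncomputable def append (T₁ T₂ : Traj f s) (h : T₁.x T₁.t₂ = T₂.x T₂.t₁) : Traj f s :=
  T₁.glue (T₂.shift (T₁.t₂ - T₂.t₁)) (add_sub_cancel T₂.t₁ T₁.t₂).symm (by rw [x_shift_t₁, h])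

section append

variable (T₁ T₂ : Traj f s) (h : T₁.x T₁.t₂ = T₂.x T₂.t₁)

@[simp]
theorem x_append_t₁ : (T₁.append T₂ h).x (T₁.append T₂ h).t₁ = T₁.x T₁.t₁ :=
  x_glue_t₁ ..

@[simp]
theorem x_append_t₂ : (T₁.append T₂ h).x (T₁.append T₂ h).t₂ = T₂.x T₂.t₂ :=
  (x_glue_t₂ ..).trans (x_shift_t₂ ..)

@[simp]
theorem supply_append : (T₁.append T₂ h).supply = T₁.supply + T₂.supply :=
  (supply_glue ..).trans (congrArg _ (supply_shift ..))

end append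

end Traj

section Storage

variable {n m : ℕ} {f : (Fin n → ℝ) → (Fin m → ℝ) → (Fin n → ℝ)}
  {s : (Fin n → ℝ) → (Fin m → ℝ) → ℝ}
  {xs : Fin n → ℝ}

theorem sub_supply_mem_Sac {T : Traj f s} {r : ℝ} (hr : r ∈ Sac f s xs (T.x T.t₂)) :
    r - T.supply ∈ Sac f s xs (T.x T.t₁) := by
  obtain ⟨T₂, h₁, h₂, rfl⟩ := hr
  exact ⟨T.append T₂ h₁.symm, by simp, by simp [h₂], by simp only [Traj.supply_append]; ring⟩

theorem add_supply_mem_Src {T : Traj f s} {r : ℝ} (hr : r ∈ Src f s xs (T.x T.t₁)) :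
    r + T.supply ∈ Src f s xs (T.x T.t₂) := by
  obtain ⟨T₁, h₁, h₂, rfl⟩ := hr
  exact ⟨T₁.append T h₂, by simp [h₁], by simp, by simp⟩

theorem zero_mem_Sac_self : (0 : ℝ) ∈ Sac f s xs xs :=
  ⟨Traj.const xs, rfl, rfl, by simp⟩

theorem zero_mem_Src_self : (0 : ℝ) ∈ Src f s xs xs :=
  ⟨Traj.const xs, rfl, rfl, by simp⟩

namespace CycloDissipativeWrt

variable (hdis : CycloDissipativeWrt f s xs)
include hdis

theorem nonpos_of_mem_Sac_self {r : ℝ} (hr : r ∈ Sac f s xs xs) : r ≤ 0 := by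
  obtain ⟨T, h₁, h₂, rfl⟩ := hr
  exact neg_nonpos.mpr (hdis T h₁ h₂)

theorem nonneg_of_mem_Src_self {r : ℝ} (hr : r ∈ Src f s xs xs) : 0 ≤ r := by
  obtain ⟨T, h₁, h₂, rfl⟩ := hr
  exact hdis T h₁ h₂

theorem le_of_mem_Sac_of_mem_Src {x : Fin n → ℝ} {r r' : ℝ} (hr : r ∈ Sac f s xs x)
    (hr' : r' ∈ Src f s xs x) : r ≤ r' := by
  obtain ⟨T, rfl, rfl, rfl⟩ := hr
  linarith [hdis.nonneg_of_mem_Src_self (add_supply_mem_Src hr')]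

theorem bddAbove_Sac {x : Fin n → ℝ} (hx : (Src f s xs x).Nonempty) : BddAbove (Sac f s xs x) :=
  let ⟨r', hr'⟩ := hx
  ⟨r', fun _ hr => hdis.le_of_mem_Sac_of_mem_Src hr hr'⟩

theorem bddBelow_Src {x : Fin n → ℝ} (hx : (Sac f s xs x).Nonempty) : BddBelow (Src f s xs x) :=
  let ⟨r, hr⟩ := hx
  ⟨r, fun _ hr' => hdis.le_of_mem_Sac_of_mem_Src hr hr'⟩

theorem sSup_Sac_self : sSup (Sac f s xs xs) = 0 :=
  IsGreatest.csSup_eq ⟨zero_mem_Sac_self, fun _ => hdis.nonpos_of_mem_Sac_self⟩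

theorem sInf_Src_self : sInf (Src f s xs xs) = 0 :=
  IsLeast.csInf_eq ⟨zero_mem_Src_self, fun _ => hdis.nonneg_of_mem_Src_self⟩

variable (hSac : ∀ x, (Sac f s xs x).Nonempty) (hSrc : ∀ x, (Src f s xs x).Nonempty)
include hSac hSrc

theorem isStorage_sSup_Sac : IsStorage f s fun x => sSup (Sac f s xs x) := by
  intro T
  rw [sub_le_iff_le_add]
  refine csSup_le (hSac _) fun r hr => ?_
  linarith [le_csSup (hdis.bddAbove_Sac (hSrc _)) (sub_supply_mem_Sac hr)]

theorem isStorage_sInf_Src : IsStorage f s fun x => sInf (Src f s xs x) := by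
  intro T
  rw [sub_le_comm]
  refine le_csInf (hSrc _) fun r hr => ?_
  linarith [csInf_le (hdis.bddBelow_Src (hSac _)) (add_supply_mem_Src hr)]

end CycloDissipativeWrt

namespace IsStorage

variable {F : (Fin n → ℝ) → ℝ} (hF : IsStorage f s F) {x : Fin n → ℝ}
include hF

theorem sSup_Sac_le (hx : (Sac f s xs x).Nonempty) : sSup (Sac f s xs x) ≤ F x - F xs := by
  refine csSup_le hx fun r ⟨T, h₁, h₂, hr⟩ => ?_
  have := hF T
  rw [h₁, h₂] at this
  linarith

theorem le_sInf_Src (hx : (Src f s xs x).Nonempty) : F x - F xs ≤ sInf (Src f s xs x) := by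
  refine le_csInf hx fun r ⟨T, h₁, h₂, hr⟩ => ?_
  have := hF T
  rw [h₁, h₂] at this
  linarith

end IsStorage

end Storage

theorem availableStorage_requiredSupply_are_storage_general {n m : ℕ}
    (f : (Fin n → ℝ) → (Fin m → ℝ) → (Fin n → ℝ))
    (s : (Fin n → ℝ) → (Fin m → ℝ) → ℝ)
    (xs : Fin n → ℝ)
    (hreach : ∀ x : Fin n → ℝ, ∃ T : Traj f s, T.x T.t₁ = xs ∧ T.x T.t₂ = x)
    (hctrl : ∀ x : Fin n → ℝ, ∃ T : Traj f s, T.x T.t₁ = x ∧ T.x T.t₂ = xs)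
    (hdis : CycloDissipativeWrt f s xs) :
    (∀ x, (Sac f s xs x).Nonempty ∧ BddAbove (Sac f s xs x) ∧
      (Src f s xs x).Nonempty ∧ BddBelow (Src f s xs x)) ∧
    IsStorage f s (fun x => sSup (Sac f s xs x)) ∧
    IsStorage f s (fun x => sInf (Src f s xs x)) ∧
    sSup (Sac f s xs xs) = 0 ∧ sInf (Src f s xs xs) = 0 ∧
    (∀ F : (Fin n → ℝ) → ℝ, IsStorage f s F →
      ∀ x, sSup (Sac f s xs x) ≤ F x - F xs ∧ F x - F xs ≤ sInf (Src f s xs x)) := by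
  have hSac : ∀ x, (Sac f s xs x).Nonempty := fun x =>
    let ⟨T, h₁, h₂⟩ := hctrl x
    ⟨_, T, h₁, h₂, rfl⟩
  have hSrc : ∀ x, (Src f s xs x).Nonempty := fun x =>
    let ⟨T, h₁, h₂⟩ := hreach x
    ⟨_, T, h₁, h₂, rfl⟩
  exact ⟨fun x => ⟨hSac x, hdis.bddAbove_Sac (hSrc x), hSrc x, hdis.bddBelow_Src (hSac x)⟩,
    hdis.isStorage_sSup_Sac hSac hSrc, hdis.isStorage_sInf_Src hSac hSrc, hdis.sSup_Sac_self,
    hdis.sInf_Src_self, fun F hF x => ⟨hF.sSup_Sac_le (hSac x), hF.le_sInf_Src (hSrc x)⟩⟩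

/-- If the system is reachable from and controllable to `xs` and cyclo-dissipative with
respect to `xs`, then the sets defining `F_ac` and `F_rc` are nonempty and bounded
(above, resp. below), `F_ac := sSup (Sac ·)` and `F_rc := sInf (Src ·)` are storage
functions vanishing at `xs`, and every storage function `F` satisfies
`F_ac x ≤ F x - F xs ≤ F_rc x`. -/
theorem availableStorage_requiredSupply_are_storage {n m : ℕ}
    (f : (Fin n → ℝ) → (Fin m → ℝ) → (Fin n → ℝ))
    (s : (Fin n → ℝ) → (Fin m → ℝ) → ℝ)
    (hfc : Continuous fun q : (Fin n → ℝ) × (Fin m → ℝ) => f q.1 q.2)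
    (hsc : Continuous fun q : (Fin n → ℝ) × (Fin m → ℝ) => s q.1 q.2)
    (xs : Fin n → ℝ)
    (hreach : ∀ x : Fin n → ℝ, ∃ T : Traj f s, T.x T.t₁ = xs ∧ T.x T.t₂ = x)
    (hctrl : ∀ x : Fin n → ℝ, ∃ T : Traj f s, T.x T.t₁ = x ∧ T.x T.t₂ = xs)
    (hdis : CycloDissipativeWrt f s xs) :
    (∀ x, (Sac f s xs x).Nonempty ∧ BddAbove (Sac f s xs x) ∧
      (Src f s xs x).Nonempty ∧ BddBelow (Src f s xs x)) ∧
    IsStorage f s (fun x => sSup (Sac f s xs x)) ∧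
    IsStorage f s (fun x => sInf (Src f s xs x)) ∧
    sSup (Sac f s xs xs) = 0 ∧ sInf (Src f s xs xs) = 0 ∧
    (∀ F : (Fin n → ℝ) → ℝ, IsStorage f s F →
      ∀ x, sSup (Sac f s xs x) ≤ F x - F xs ∧ F x - F xs ≤ sInf (Src f s xs x)) :=
  availableStorage_requiredSupply_are_storage_general f s xs hreach hctrl hdis
end

section
/- For every vector of chemical potentials μ ∈ ℝ^m, the irreversible entropy production σ := (1/T) μᵀ Z 𝕃 Exp(Zᵀμ/(RT)) satisfies σ ≥ 0, and σ = 0 if and only if the vector of chemical affinities vanishes, Nᵀμ = 0, where N = ZB is the stoichiometric matrix. -/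
/-!
Writing `x = Zᵀμ` and `𝕃 = B 𝒦 Bᵀ`, the entropy production is
`(1/T) ∑ⱼ κⱼ (Bᵀx)ⱼ (Bᵀ Exp(x/(RT)))ⱼ`. If edge `j` goes from complex `i₋` to complex `i₊`, its
term is `κⱼ (x_{i₊} - x_{i₋}) (f x_{i₊} - f x_{i₋})` with `f t = exp (t/(RT))` strictly
increasing, so it is positive unless the affinity `(Bᵀx)ⱼ = (Nᵀμ)ⱼ` vanishes, in which case it is
zero.
-/

open Matrix

theorem StrictMono.sub_mul_sub_pos {α : Type*} [Ring α] [LinearOrder α] [IsStrictOrderedRing α]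
    {f : α → α} (hf : StrictMono f) {u v : α} (huv : u ≠ v) :
    0 < (u - v) * (f u - f v) := by
  rcases huv.lt_or_gt with h | h
  · exact mul_pos_of_neg_of_neg (sub_neg.2 h) (sub_neg.2 (hf h))
  · exact mul_pos (sub_pos.2 h) (sub_pos.2 (hf h))

theorem Matrix.transpose_mulVec_apply_eq_sub {ι κ α : Type*} [Fintype ι] [Ring α]
    {B : Matrix ι κ α} {j : κ} {ip im : ι} (hne : ip ≠ im) (hip : B ip j = 1)
    (him : B im j = -1) (hzero : ∀ i, i ≠ ip → i ≠ im → B i j = 0) (x : ι → α) :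
    (Bᵀ *ᵥ x) j = x ip - x im := by
  rw [mulVec, dotProduct, Fintype.sum_eq_add ip im hne fun i hi => by
    simp [hzero i hi.1 hi.2]]
  simp [hip, him, sub_eq_add_neg]

theorem Matrix.dotProduct_mul_diagonal_mul_transpose_mulVec {ι κ α : Type*} [Fintype ι]
    [Fintype κ] [DecidableEq κ] [CommSemiring α] (B : Matrix ι κ α) (w : κ → α) (x y : ι → α) :
    x ⬝ᵥ ((B * diagonal w * Bᵀ) *ᵥ y) = ∑ j, w j * ((Bᵀ *ᵥ x) j * (Bᵀ *ᵥ y) j) := by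
  rw [Matrix.mul_assoc, ← mulVec_mulVec, dotProduct_mulVec, ← mulVec_transpose,
    ← mulVec_mulVec]
  simp only [dotProduct, mulVec_diagonal]
  exact Finset.sum_congr rfl fun j _ => by ring

theorem sum_mul_mul_nonneg_and_eq_zero_iff {ι α : Type*} [Fintype ι] [Ring α] [LinearOrder α]
    [IsStrictOrderedRing α] {w d s : ι → α} (hw : ∀ j, 0 < w j)
    (hds : ∀ j, d j ≠ 0 → 0 < d j * s j) :
    0 ≤ ∑ j, w j * (d j * s j) ∧ (∑ j, w j * (d j * s j) = 0 ↔ d = 0) := by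
  have hterm : ∀ j, 0 ≤ w j * (d j * s j) ∧ (w j * (d j * s j) = 0 ↔ d j = 0) := by
    intro j
    by_cases hd : d j = 0
    · simp [hd]
    · have := mul_pos (hw j) (hds j hd)
      exact ⟨this.le, iff_of_false this.ne' hd⟩
  refine ⟨Finset.sum_nonneg fun j _ => (hterm j).1, ?_⟩
  rw [Fintype.sum_eq_zero_iff_of_nonneg fun j => (hterm j).1, funext_iff, funext_iff]
  exact forall_congr' fun j => (hterm j).2

/-- For an isolated chemical reaction network with complex composition matrix `Z`,
incidence matrix `B`, weighted Laplacian `𝕃 = B 𝒦 Bᵀ` and stoichiometric matrix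
`N = Z B`, the irreversible entropy production
`σ = (1/T) μᵀ Z 𝕃 Exp(Zᵀμ/(RT))` is nonnegative for every vector of chemical
potentials `μ`, and vanishes if and only if the chemical affinities vanish: `Nᵀ μ = 0`. -/
theorem entropy_production_nonneg {c r m : ℕ}
    (B : Matrix (Fin c) (Fin r) ℝ)
    (hB : ∀ j : Fin r, ∃ ip im : Fin c, ip ≠ im ∧ B ip j = 1 ∧ B im j = -1 ∧
      ∀ i : Fin c, i ≠ ip → i ≠ im → B i j = 0)
    (κ : Fin r → ℝ) (hκ : ∀ j, 0 < κ j)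
    (Z : Matrix (Fin m) (Fin c) ℝ)
    (R T : ℝ) (hR : 0 < R) (hT : 0 < T)
    (μ : Fin m → ℝ) :
    0 ≤ (1 / T) * (μ ⬝ᵥ (Z *ᵥ ((B * Matrix.diagonal κ * Bᵀ) *ᵥ
        fun i => Real.exp ((1 / (R * T)) * (Zᵀ *ᵥ μ) i)))) ∧
    ((1 / T) * (μ ⬝ᵥ (Z *ᵥ ((B * Matrix.diagonal κ * Bᵀ) *ᵥ
        fun i => Real.exp ((1 / (R * T)) * (Zᵀ *ᵥ μ) i)))) = 0 ↔
      (Z * B)ᵀ *ᵥ μ = 0) := by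
  set x := Zᵀ *ᵥ μ
  set f : ℝ → ℝ := fun t => Real.exp (1 / (R * T) * t)
  have hf : StrictMono f := Real.exp_strictMono.comp (strictMono_mul_left_of_pos (by positivity))
  have hquad : μ ⬝ᵥ (Z *ᵥ ((B * diagonal κ * Bᵀ) *ᵥ (f ∘ x))) =
      ∑ j, κ j * ((Bᵀ *ᵥ x) j * (Bᵀ *ᵥ (f ∘ x)) j) := by
    rw [dotProduct_mulVec, ← mulVec_transpose, dotProduct_mul_diagonal_mul_transpose_mulVec]
  have hedge : ∀ j, (Bᵀ *ᵥ x) j ≠ 0 → 0 < (Bᵀ *ᵥ x) j * (Bᵀ *ᵥ (f ∘ x)) j := by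
    intro j hj
    obtain ⟨ip, im, hne, hip, him, hzero⟩ := hB j
    have hcol := transpose_mulVec_apply_eq_sub hne hip him hzero
    rw [hcol] at hj
    rw [hcol, hcol]
    exact hf.sub_mul_sub_pos (sub_ne_zero.1 hj)
  have haffinity : (Z * B)ᵀ *ᵥ μ = Bᵀ *ᵥ x := by rw [transpose_mul, ← mulVec_mulVec]
  obtain ⟨hnonneg, hzero⟩ := sum_mul_mul_nonneg_and_eq_zero_iff hκ hedge
  change 0 ≤ 1 / T * (μ ⬝ᵥ (Z *ᵥ ((B * diagonal κ * Bᵀ) *ᵥ (f ∘ x)))) ∧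
    (1 / T * (μ ⬝ᵥ (Z *ᵥ ((B * diagonal κ * Bᵀ) *ᵥ (f ∘ x)))) = 0 ↔ _)
  rw [hquad, haffinity, mul_eq_zero, or_iff_right (by positivity)]
  exact ⟨by positivity, hzero⟩
end
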